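/- arXiv:2603.19161 — 5 statements merged into one kernel-verified Lean document; each statement's English description precedes it below -/
import Mathlib

section
/- Homological Perturbation Lemma, part 1 (paper's Appendix B Proposition): Given a homotopy equivalence between cochain complexes (S, d_S) and (B, d_B) with chain maps ι: S → B, π: B → S, homotopy η, and given a small perturbation δ of d_B, set A = (id − δ∘η)^{−1}∘δ (a family of maps Bⁿ → Bⁿ⁺¹). Then the degreewise map d_S + π∘A∘ι: Sⁿ → Sⁿ⁺¹ is square-zero, i.e. (d_S + π∘A∘ι)∘(d_S + π∘A∘ι) = 0 in every degree, so it defines a new differential d′_S on the graded module underlying S. -/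
/-!
With `A = (1 - δη)⁻¹ δ` one has `A = δ (1 + ηA)` and `A ηδ = A - δ`. Using that `ι`, `π` are chain
maps and `ιπ = 1 + d_B η + η d_B`, the square of `d_S + πAι` becomes `π Φ ι` with
`Φ = d_B A + A d_B + A (1 + d_B η + η d_B) A`. Writing `A = δP` with `P = 1 + ηA` and
`Q = (d_B + δ) P`, the perturbation equation gives `d_B δ P = -δ Q`, whence
`A η d_B A = -(A - δ) Q` and `Φ = AQ - δQ - (A - δ)Q = 0`.
-/

universe u v

/-- `g` (given in each degree `n + 1`, which covers every degree) induces a bijection on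
cohomology in every degree: elementwise surjectivity and injectivity of the induced map
on cohomology.  This is the notion of quasi-isomorphism for families of `R`-modules with
differentials. -/
def IsQuasiIsoShifted {R : Type u} [Ring R]
    {X Y : ℤ → Type v} [∀ n, AddCommGroup (X n)] [∀ n, Module R (X n)]
    [∀ n, AddCommGroup (Y n)] [∀ n, Module R (Y n)]
    (dX : ∀ n : ℤ, X n →ₗ[R] X (n + 1)) (dY : ∀ n : ℤ, Y n →ₗ[R] Y (n + 1))
    (g : ∀ n : ℤ, X (n + 1) →ₗ[R] Y (n + 1)) : Prop :=
  (∀ (n : ℤ) (y : Y (n + 1)), dY (n + 1) y = 0 →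
      ∃ x : X (n + 1), dX (n + 1) x = 0 ∧ ∃ z : Y n, g n x = y + dY n z) ∧
  (∀ (n : ℤ) (x : X (n + 1)), dX (n + 1) x = 0 → (∃ z : Y n, g n x = dY n z) →
      ∃ w : X n, x = dX n w)

namespace HomologicalPerturbation

open LinearMap

variable {R : Type*} [Ring R]

section PerturbationOperator

variable {M N : Type*} [AddCommGroup M] [Module R M]
  [AddCommGroup N] [Module R N] {δ : M →ₗ[R] N} {η : N →ₗ[R] M}

/-- The paper's `A = (1 - δη)⁻¹ δ`; `Ring.inverse` returns `0` when `1 - δη` is not a unit. -/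
noncomputable def perturbationOperator (δ : M →ₗ[R] N) (η : N →ₗ[R] M) : M →ₗ[R] N :=
  Ring.inverse (1 - δ ∘ₗ η : Module.End R N) ∘ₗ δ

theorem comp_comp_perturbationOperator (small : IsUnit (1 - δ ∘ₗ η : Module.End R N)) :
    δ ∘ₗ η ∘ₗ perturbationOperator δ η = perturbationOperator δ η - δ := by
  rw [perturbationOperator]
  set u : Module.End R N := 1 - δ ∘ₗ η
  have hδη : δ ∘ₗ η = 1 - u := (sub_sub_cancel 1 _).symm
  rw [← comp_assoc, hδη, ← comp_assoc, ← Module.End.mul_eq_comp,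
    sub_mul, one_mul, Ring.mul_inverse_cancel u small, sub_comp, Module.End.one_eq_id, id_comp]

theorem perturbationOperator_comp_comp (small : IsUnit (1 - δ ∘ₗ η : Module.End R N)) :
    perturbationOperator δ η ∘ₗ η ∘ₗ δ = perturbationOperator δ η - δ := by
  rw [perturbationOperator]
  set u : Module.End R N := 1 - δ ∘ₗ η
  have hδη : δ ∘ₗ η = 1 - u := (sub_sub_cancel 1 _).symm
  rw [comp_assoc, show δ ∘ₗ η ∘ₗ δ = (δ ∘ₗ η) ∘ₗ δ from rfl, hδη,
    ← comp_assoc, ← Module.End.mul_eq_comp, mul_sub, mul_one, Ring.inverse_mul_cancel u small,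
    sub_comp, Module.End.one_eq_id, id_comp]

end PerturbationOperator

theorem perturbation_twisting_identity {B₀ B₁ B₂ : Type*}
    [AddCommGroup B₀] [Module R B₀] [AddCommGroup B₁] [Module R B₁]
    [AddCommGroup B₂] [Module R B₂]
    {d₀ δ₀ A₀ : B₀ →ₗ[R] B₁} {d₁ δ₁ A₁ : B₁ →ₗ[R] B₂} {η₀ : B₁ →ₗ[R] B₀} {η₁ : B₂ →ₗ[R] B₁}
    (hd : d₁ ∘ₗ d₀ = 0) (hδ : (d₁ + δ₁) ∘ₗ (d₀ + δ₀) = 0)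
    (hA₀ : δ₀ ∘ₗ η₀ ∘ₗ A₀ = A₀ - δ₀) (hA₁ : A₁ ∘ₗ η₁ ∘ₗ δ₁ = A₁ - δ₁) :
    d₁ ∘ₗ A₀ + A₁ ∘ₗ d₀ + A₁ ∘ₗ (LinearMap.id + d₀ ∘ₗ η₀ + η₁ ∘ₗ d₁) ∘ₗ A₀ = 0 := by
  ext x
  obtain ⟨p, hp⟩ : ∃ p, p = x + η₀ (A₀ x) := ⟨_, rfl⟩
  obtain ⟨q, hq⟩ : ∃ q, q = (d₀ + δ₀) p := ⟨_, rfl⟩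
  have hAx : A₀ x = δ₀ p := by
    have : δ₀ (η₀ (A₀ x)) = A₀ x - δ₀ x := congr($hA₀ x)
    rw [hp, map_add, this, add_sub_cancel]
  have hq' : q = d₀ p + A₀ x := by rw [hq, LinearMap.add_apply, hAx]
  have hdAx : d₁ (A₀ x) = -δ₁ q := by
    have hδq : d₁ q + δ₁ q = 0 := by rw [hq]; exact congr($hδ p)
    have hddp : d₁ (d₀ p) = 0 := congr($hd p)
    have hdq : d₁ q = d₁ (A₀ x) := by rw [hq', map_add, hddp, zero_add]
    rw [hdq] at hδq
    exact eq_neg_of_add_eq_zero_left hδq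
  have hqx : q = d₀ x + d₀ (η₀ (A₀ x)) + A₀ x := by rw [hq', hp, map_add]
  have hAηδq : A₁ (η₁ (δ₁ q)) = A₁ q - δ₁ q := congr($hA₁ q)
  simp only [LinearMap.add_apply, comp_apply, id_apply, LinearMap.zero_apply, map_add]
  rw [hdAx, map_neg, map_neg, hAηδq, hqx]
  simp only [map_add]
  abel

theorem perturbed_differential_comp_eq {S₀ S₁ S₂ B₀ B₁ B₂ : Type*}
    [AddCommGroup S₀] [Module R S₀] [AddCommGroup S₁] [Module R S₁]
    [AddCommGroup S₂] [Module R S₂]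
    [AddCommGroup B₀] [Module R B₀] [AddCommGroup B₁] [Module R B₁]
    [AddCommGroup B₂] [Module R B₂]
    {e₀ : S₀ →ₗ[R] S₁} {e₁ : S₁ →ₗ[R] S₂} {d₀ A₀ : B₀ →ₗ[R] B₁} {d₁ A₁ : B₁ →ₗ[R] B₂}
    {ι₀ : S₀ →ₗ[R] B₀} {ι₁ : S₁ →ₗ[R] B₁} {π₁ : B₁ →ₗ[R] S₁} {π₂ : B₂ →ₗ[R] S₂}
    (he : e₁ ∘ₗ e₀ = 0) (hι : d₀ ∘ₗ ι₀ = ι₁ ∘ₗ e₀) (hπ : e₁ ∘ₗ π₁ = π₂ ∘ₗ d₁) :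
    (e₁ + π₂ ∘ₗ A₁ ∘ₗ ι₁) ∘ₗ (e₀ + π₁ ∘ₗ A₀ ∘ₗ ι₀) =
      π₂ ∘ₗ (d₁ ∘ₗ A₀ + A₁ ∘ₗ d₀ + A₁ ∘ₗ (ι₁ ∘ₗ π₁) ∘ₗ A₀) ∘ₗ ι₀ := by
  ext x
  have hex : e₁ (e₀ x) = 0 := congr($he x)
  have hιx : ι₁ (e₀ x) = d₀ (ι₀ x) := congr($hι x).symm
  have hπx : e₁ (π₁ (A₀ (ι₀ x))) = π₂ (d₁ (A₀ (ι₀ x))) := congr($hπ (A₀ (ι₀ x)))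
  simp only [LinearMap.add_apply, comp_apply, map_add, hex, hιx, hπx]
  abel

end HomologicalPerturbation

open HomologicalPerturbation in
theorem homological_perturbation_lemma_part1_general {R : Type u} [Ring R]
    (S B : ℤ → Type v)
    [∀ n, AddCommGroup (S n)] [∀ n, Module R (S n)]
    [∀ n, AddCommGroup (B n)] [∀ n, Module R (B n)]
    (dS : ∀ n : ℤ, S n →ₗ[R] S (n + 1)) (dB : ∀ n : ℤ, B n →ₗ[R] B (n + 1))
    (hdS : ∀ n, dS (n + 1) ∘ₗ dS n = 0) (hdB : ∀ n, dB (n + 1) ∘ₗ dB n = 0)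
    (ι : ∀ n, S n →ₗ[R] B n) (π : ∀ n, B n →ₗ[R] S n)
    (hι : ∀ n, dB n ∘ₗ ι n = ι (n + 1) ∘ₗ dS n)
    (hπ : ∀ n, dS n ∘ₗ π n = π (n + 1) ∘ₗ dB n)
    (η : ∀ n : ℤ, B (n + 1) →ₗ[R] B n)
    (hη : ∀ n, ι (n + 1) ∘ₗ π (n + 1) =
      LinearMap.id + dB n ∘ₗ η n + η (n + 1) ∘ₗ dB (n + 1))
    (δ : ∀ n : ℤ, B n →ₗ[R] B (n + 1))
    (hδ : ∀ n, (dB (n + 1) + δ (n + 1)) ∘ₗ (dB n + δ n) = 0)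
    (small : ∀ n : ℤ,
      IsUnit ((1 : Module.End R (B (n + 1))) - (δ n ∘ₗ η n : Module.End R (B (n + 1)))))
    (A : ∀ n : ℤ, B n →ₗ[R] B (n + 1))
    (hA : ∀ n : ℤ, A n =
      (Ring.inverse ((1 : Module.End R (B (n + 1)))
        - (δ n ∘ₗ η n : Module.End R (B (n + 1)))) : Module.End R (B (n + 1))) ∘ₗ δ n) :
    ∀ n : ℤ,
      (dS (n + 1) + π (n + 1 + 1) ∘ₗ A (n + 1) ∘ₗ ι (n + 1)) ∘ₗ
        (dS n + π (n + 1) ∘ₗ A n ∘ₗ ι n) = 0 := by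
  intro n
  have hA' : ∀ n, A n = perturbationOperator (δ n) (η n) := hA
  rw [perturbed_differential_comp_eq (hdS n) (hι n) (hπ (n + 1)), hη n,
    perturbation_twisting_identity (hdB n) (hδ n)
      (hA' n ▸ comp_comp_perturbationOperator (small n))
      (hA' (n + 1) ▸ perturbationOperator_comp_comp (small (n + 1))),
    LinearMap.zero_comp, LinearMap.comp_zero]

theorem homological_perturbation_lemma_part1 {R : Type u} [Ring R]
    (S B : ℤ → Type v)
    [∀ n, AddCommGroup (S n)] [∀ n, Module R (S n)]
    [∀ n, AddCommGroup (B n)] [∀ n, Module R (B n)]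
    (dS : ∀ n : ℤ, S n →ₗ[R] S (n + 1)) (dB : ∀ n : ℤ, B n →ₗ[R] B (n + 1))
    (hdS : ∀ n, dS (n + 1) ∘ₗ dS n = 0) (hdB : ∀ n, dB (n + 1) ∘ₗ dB n = 0)
    (ι : ∀ n, S n →ₗ[R] B n) (π : ∀ n, B n →ₗ[R] S n)
    (hι : ∀ n, dB n ∘ₗ ι n = ι (n + 1) ∘ₗ dS n)
    (hπ : ∀ n, dS n ∘ₗ π n = π (n + 1) ∘ₗ dB n)
    (hιq : IsQuasiIsoShifted dS dB fun n => ι (n + 1))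
    (hπq : IsQuasiIsoShifted dB dS fun n => π (n + 1))
    (η : ∀ n : ℤ, B (n + 1) →ₗ[R] B n)
    (hη : ∀ n, ι (n + 1) ∘ₗ π (n + 1) =
      LinearMap.id + dB n ∘ₗ η n + η (n + 1) ∘ₗ dB (n + 1))
    (δ : ∀ n : ℤ, B n →ₗ[R] B (n + 1))
    (hδ : ∀ n, (dB (n + 1) + δ (n + 1)) ∘ₗ (dB n + δ n) = 0)
    (small : ∀ n : ℤ,
      IsUnit ((1 : Module.End R (B (n + 1))) - (δ n ∘ₗ η n : Module.End R (B (n + 1)))))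
    (A : ∀ n : ℤ, B n →ₗ[R] B (n + 1))
    (hA : ∀ n : ℤ, A n =
      (Ring.inverse ((1 : Module.End R (B (n + 1)))
        - (δ n ∘ₗ η n : Module.End R (B (n + 1)))) : Module.End R (B (n + 1))) ∘ₗ δ n) :
    ∀ n : ℤ,
      (dS (n + 1) + π (n + 1 + 1) ∘ₗ A (n + 1) ∘ₗ ι (n + 1)) ∘ₗ
        (dS n + π (n + 1) ∘ₗ A n ∘ₗ ι n) = 0 :=
  homological_perturbation_lemma_part1_general S B dS dB hdS hdB ι π hι hπ η hη δ hδ small A hA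
end

section
/- Homological Perturbation Lemma, part 2 (paper's Appendix B Proposition): Given a homotopy equivalence between cochain complexes (S, d_S) and (B, d_B) with chain maps ι: S → B, π: B → S, homotopy η, and given a small perturbation δ of d_B, set A = (id − δ∘η)^{−1}∘δ, d′_S = d_S + π∘A∘ι, ι′ = ι + η∘A∘ι, and π′ = π + π∘A∘η. Then ι′ and π′ are chain maps: (d_B + δ)∘ι′ = ι′∘d′_S and d′_S∘π′ = π′∘(d_B + δ) in every degree. -/
section InverseOneSubComp

variable {R M N : Type*} [Semiring R] [AddCommGroup M] [Module R M] [AddCommGroup N] [Module R N]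
  {f : M →ₗ[R] N} {g : N →ₗ[R] M} {A : M →ₗ[R] N}

theorem one_sub_comp_comp_of_eq_inverse_comp (hu : IsUnit (1 - f ∘ₗ g : Module.End R N))
    (hA : A = Ring.inverse (1 - f ∘ₗ g : Module.End R N) ∘ₗ f) :
    (1 - f ∘ₗ g : Module.End R N) ∘ₗ A = f := by
  rw [hA, ← LinearMap.comp_assoc, ← Module.End.mul_eq_comp, Ring.mul_inverse_cancel _ hu]
  rfl

theorem eq_add_comp_comp_self_of_eq_inverse_comp (hu : IsUnit (1 - f ∘ₗ g : Module.End R N))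
    (hA : A = Ring.inverse (1 - f ∘ₗ g : Module.End R N) ∘ₗ f) :
    A = f + f ∘ₗ g ∘ₗ A := by
  refine eq_add_of_sub_eq ?_
  simpa only [LinearMap.sub_comp, LinearMap.comp_assoc, Module.End.one_eq_id,
    LinearMap.id_comp] using one_sub_comp_comp_of_eq_inverse_comp hu hA

theorem eq_add_self_comp_comp_of_eq_inverse_comp (hu : IsUnit (1 - f ∘ₗ g : Module.End R N))
    (hA : A = Ring.inverse (1 - f ∘ₗ g : Module.End R N) ∘ₗ f) :
    A = f + A ∘ₗ g ∘ₗ f := by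
  refine eq_add_of_sub_eq ?_
  calc A - A ∘ₗ g ∘ₗ f
      = Ring.inverse (1 - f ∘ₗ g : Module.End R N) ∘ₗ (1 - f ∘ₗ g : Module.End R N) ∘ₗ f := by
        simp only [hA, LinearMap.sub_comp, LinearMap.comp_sub, LinearMap.comp_assoc]
        rfl
    _ = f := by
        rw [← LinearMap.comp_assoc, ← Module.End.mul_eq_comp, Ring.inverse_mul_cancel _ hu]
        rfl

end InverseOneSubComp

section Perturbation

variable {R : Type*} [Semiring R] {B : ℤ → Type*} [∀ n, AddCommGroup (B n)] [∀ n, Module R (B n)]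
  {dB δ A : ∀ n : ℤ, B n →ₗ[R] B (n + 1)} {η : ∀ n : ℤ, B (n + 1) →ₗ[R] B n}

theorem maurerCartan_of_eq_inverse_comp (hdB : ∀ n, dB (n + 1) ∘ₗ dB n = 0)
    (hδ : ∀ n, (dB (n + 1) + δ (n + 1)) ∘ₗ (dB n + δ n) = 0)
    (small : ∀ n, IsUnit (1 - δ n ∘ₗ η n : Module.End R (B (n + 1))))
    (hA : ∀ n, A n = Ring.inverse (1 - δ n ∘ₗ η n : Module.End R (B (n + 1))) ∘ₗ δ n)
    (n : ℤ) :
    dB (n + 1) ∘ₗ A n + A (n + 1) ∘ₗ dB n +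
      A (n + 1) ∘ₗ (LinearMap.id + dB n ∘ₗ η n + η (n + 1) ∘ₗ dB (n + 1)) ∘ₗ A n = 0 := by
  have hcross : ∀ x, dB (n + 1) (δ n x) + δ (n + 1) (dB n x) + δ (n + 1) (δ n x) = 0 := by
    intro x
    have h := LinearMap.congr_fun (hδ n) x
    have h0 : dB (n + 1) (dB n x) = 0 := LinearMap.congr_fun (hdB n) x
    simp only [LinearMap.comp_apply, LinearMap.add_apply, map_add, LinearMap.zero_apply] at h
    linear_combination (norm := abel) h - h0
  have hA₀ := LinearMap.congr_fun (eq_add_comp_comp_self_of_eq_inverse_comp (small n) (hA n))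
  have hA₁ := LinearMap.congr_fun
    (one_sub_comp_comp_of_eq_inverse_comp (small (n + 1)) (hA (n + 1)))
  simp only [LinearMap.comp_apply, LinearMap.add_apply, LinearMap.sub_apply,
    Module.End.one_apply] at hA₀ hA₁
  ext x
  apply ((Module.End.isUnit_iff _).mp (small (n + 1))).injective
  simp only [LinearMap.comp_apply, LinearMap.add_apply, LinearMap.sub_apply, LinearMap.id_apply,
    LinearMap.zero_apply, Module.End.one_apply, map_add, map_zero]
  have hdBA₀ := congrArg (dB (n + 1)) (hA₀ x)
  have hδA₀ := congrArg (δ (n + 1)) (hA₀ x)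
  simp only [map_add] at hdBA₀ hδA₀
  linear_combination (norm := abel) hA₁ (dB n x) + hA₁ (A n x) + hA₁ (dB n (η n (A n x)))
    + hA₁ (η (n + 1) (dB (n + 1) (A n x))) + hdBA₀ + hδA₀ + hcross x + hcross (η n (A n x))

end Perturbation

section ChainMaps

variable {R : Type*} [Semiring R] {S B : ℤ → Type*} [∀ n, AddCommGroup (S n)] [∀ n, Module R (S n)]
  [∀ n, AddCommGroup (B n)] [∀ n, Module R (B n)] {dS : ∀ n : ℤ, S n →ₗ[R] S (n + 1)}
  {dB δ A : ∀ n : ℤ, B n →ₗ[R] B (n + 1)} {η : ∀ n : ℤ, B (n + 1) →ₗ[R] B n}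
  {ι : ∀ n, S n →ₗ[R] B n} {π : ∀ n, B n →ₗ[R] S n} {n : ℤ}

theorem perturbed_inclusion_comm (hι : dB n ∘ₗ ι n = ι (n + 1) ∘ₗ dS n)
    (hη : ι (n + 1) ∘ₗ π (n + 1) = LinearMap.id + dB n ∘ₗ η n + η (n + 1) ∘ₗ dB (n + 1))
    (hA : A n = δ n + δ n ∘ₗ η n ∘ₗ A n)
    (hmc : dB (n + 1) ∘ₗ A n + A (n + 1) ∘ₗ dB n +
      A (n + 1) ∘ₗ (LinearMap.id + dB n ∘ₗ η n + η (n + 1) ∘ₗ dB (n + 1)) ∘ₗ A n = 0) :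
    (dB n + δ n) ∘ₗ (ι n + η n ∘ₗ A n ∘ₗ ι n) =
      (ι (n + 1) + η (n + 1) ∘ₗ A (n + 1) ∘ₗ ι (n + 1)) ∘ₗ (dS n + π (n + 1) ∘ₗ A n ∘ₗ ι n) := by
  ext x
  have hι' := LinearMap.congr_fun hι
  have hη' := LinearMap.congr_fun hη
  have hA' := LinearMap.congr_fun hA (ι n x)
  have hmc' := congrArg (η (n + 1)) (LinearMap.congr_fun hmc (ι n x))
  simp only [LinearMap.comp_apply, LinearMap.add_apply, LinearMap.id_apply, LinearMap.zero_apply,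
    map_add, map_zero] at hι' hη' hA' hmc'
  simp only [LinearMap.comp_apply, LinearMap.add_apply, map_add, ← hι', hη']
  linear_combination (norm := abel) -hA' - hmc'

theorem perturbed_projection_comm (hπ : dS (n + 1) ∘ₗ π (n + 1) = π (n + 1 + 1) ∘ₗ dB (n + 1))
    (hη : ι (n + 1) ∘ₗ π (n + 1) = LinearMap.id + dB n ∘ₗ η n + η (n + 1) ∘ₗ dB (n + 1))
    (hA : A (n + 1) = δ (n + 1) + A (n + 1) ∘ₗ η (n + 1) ∘ₗ δ (n + 1))
    (hmc : dB (n + 1) ∘ₗ A n + A (n + 1) ∘ₗ dB n +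
      A (n + 1) ∘ₗ (LinearMap.id + dB n ∘ₗ η n + η (n + 1) ∘ₗ dB (n + 1)) ∘ₗ A n = 0) :
    (dS (n + 1) + π (n + 1 + 1) ∘ₗ A (n + 1) ∘ₗ ι (n + 1)) ∘ₗ
        (π (n + 1) + π (n + 1) ∘ₗ A n ∘ₗ η n) =
      (π (n + 1 + 1) + π (n + 1 + 1) ∘ₗ A (n + 1) ∘ₗ η (n + 1)) ∘ₗ (dB (n + 1) + δ (n + 1)) := by
  ext y
  have hπ' := LinearMap.congr_fun hπ
  have hη' := LinearMap.congr_fun hη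
  have hA' := congrArg (π (n + 1 + 1)) (LinearMap.congr_fun hA y)
  have hmc' := congrArg (π (n + 1 + 1)) (LinearMap.congr_fun hmc (η n y))
  simp only [LinearMap.comp_apply, LinearMap.add_apply, LinearMap.id_apply, LinearMap.zero_apply,
    map_add, map_zero] at hπ' hη' hA' hmc'
  simp only [LinearMap.comp_apply, LinearMap.add_apply, map_add, hπ', hη']
  linear_combination (norm := abel) hA' + hmc'

end ChainMaps

theorem homological_perturbation_lemma_part2_general {R : Type u} [Ring R]
    (S B : ℤ → Type v)
    [∀ n, AddCommGroup (S n)] [∀ n, Module R (S n)]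
    [∀ n, AddCommGroup (B n)] [∀ n, Module R (B n)]
    (dS : ∀ n : ℤ, S n →ₗ[R] S (n + 1)) (dB : ∀ n : ℤ, B n →ₗ[R] B (n + 1))
    (hdB : ∀ n, dB (n + 1) ∘ₗ dB n = 0)
    (ι : ∀ n, S n →ₗ[R] B n) (π : ∀ n, B n →ₗ[R] S n)
    (hι : ∀ n, dB n ∘ₗ ι n = ι (n + 1) ∘ₗ dS n)
    (hπ : ∀ n, dS n ∘ₗ π n = π (n + 1) ∘ₗ dB n)
    (η : ∀ n : ℤ, B (n + 1) →ₗ[R] B n)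
    (hη : ∀ n, ι (n + 1) ∘ₗ π (n + 1) =
      LinearMap.id + dB n ∘ₗ η n + η (n + 1) ∘ₗ dB (n + 1))
    (δ : ∀ n : ℤ, B n →ₗ[R] B (n + 1))
    (hδ : ∀ n, (dB (n + 1) + δ (n + 1)) ∘ₗ (dB n + δ n) = 0)
    (small : ∀ n : ℤ,
      IsUnit ((1 : Module.End R (B (n + 1))) - (δ n ∘ₗ η n : Module.End R (B (n + 1)))))
    (A : ∀ n : ℤ, B n →ₗ[R] B (n + 1))
    (hA : ∀ n : ℤ, A n =
      (Ring.inverse ((1 : Module.End R (B (n + 1)))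
        - (δ n ∘ₗ η n : Module.End R (B (n + 1)))) : Module.End R (B (n + 1))) ∘ₗ δ n)
:
    (∀ n : ℤ,
      (dB n + δ n) ∘ₗ (ι n + η n ∘ₗ A n ∘ₗ ι n) =
        (ι (n + 1) + η (n + 1) ∘ₗ A (n + 1) ∘ₗ ι (n + 1)) ∘ₗ
          (dS n + π (n + 1) ∘ₗ A n ∘ₗ ι n)) ∧
    (∀ n : ℤ,
      (dS (n + 1) + π (n + 1 + 1) ∘ₗ A (n + 1) ∘ₗ ι (n + 1)) ∘ₗ
          (π (n + 1) + π (n + 1) ∘ₗ A n ∘ₗ η n) =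
        (π (n + 1 + 1) + π (n + 1 + 1) ∘ₗ A (n + 1) ∘ₗ η (n + 1)) ∘ₗ
          (dB (n + 1) + δ (n + 1))) := by
  have hmc := maurerCartan_of_eq_inverse_comp hdB hδ small hA
  refine ⟨fun n => ?_, fun n => ?_⟩
  · exact perturbed_inclusion_comm (hι n) (hη n)
      (eq_add_comp_comp_self_of_eq_inverse_comp (small n) (hA n)) (hmc n)
  · exact perturbed_projection_comm (hπ (n + 1)) (hη n)
      (eq_add_self_comp_comp_of_eq_inverse_comp (small (n + 1)) (hA (n + 1))) (hmc n)

theorem homological_perturbation_lemma_part2 {R : Type u} [Ring R]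
    (S B : ℤ → Type v)
    [∀ n, AddCommGroup (S n)] [∀ n, Module R (S n)]
    [∀ n, AddCommGroup (B n)] [∀ n, Module R (B n)]
    (dS : ∀ n : ℤ, S n →ₗ[R] S (n + 1)) (dB : ∀ n : ℤ, B n →ₗ[R] B (n + 1))
    (hdS : ∀ n, dS (n + 1) ∘ₗ dS n = 0) (hdB : ∀ n, dB (n + 1) ∘ₗ dB n = 0)
    (ι : ∀ n, S n →ₗ[R] B n) (π : ∀ n, B n →ₗ[R] S n)
    (hι : ∀ n, dB n ∘ₗ ι n = ι (n + 1) ∘ₗ dS n)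
    (hπ : ∀ n, dS n ∘ₗ π n = π (n + 1) ∘ₗ dB n)
    (hιq : IsQuasiIsoShifted dS dB fun n => ι (n + 1))
    (hπq : IsQuasiIsoShifted dB dS fun n => π (n + 1))
    (η : ∀ n : ℤ, B (n + 1) →ₗ[R] B n)
    (hη : ∀ n, ι (n + 1) ∘ₗ π (n + 1) =
      LinearMap.id + dB n ∘ₗ η n + η (n + 1) ∘ₗ dB (n + 1))
    (δ : ∀ n : ℤ, B n →ₗ[R] B (n + 1))
    (hδ : ∀ n, (dB (n + 1) + δ (n + 1)) ∘ₗ (dB n + δ n) = 0)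
    (small : ∀ n : ℤ,
      IsUnit ((1 : Module.End R (B (n + 1))) - (δ n ∘ₗ η n : Module.End R (B (n + 1)))))
    (A : ∀ n : ℤ, B n →ₗ[R] B (n + 1))
    (hA : ∀ n : ℤ, A n =
      (Ring.inverse ((1 : Module.End R (B (n + 1)))
        - (δ n ∘ₗ η n : Module.End R (B (n + 1)))) : Module.End R (B (n + 1))) ∘ₗ δ n)
:
    (∀ n : ℤ,
      (dB n + δ n) ∘ₗ (ι n + η n ∘ₗ A n ∘ₗ ι n) =
        (ι (n + 1) + η (n + 1) ∘ₗ A (n + 1) ∘ₗ ι (n + 1)) ∘ₗ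
          (dS n + π (n + 1) ∘ₗ A n ∘ₗ ι n)) ∧
    (∀ n : ℤ,
      (dS (n + 1) + π (n + 1 + 1) ∘ₗ A (n + 1) ∘ₗ ι (n + 1)) ∘ₗ
          (π (n + 1) + π (n + 1) ∘ₗ A n ∘ₗ η n) =
        (π (n + 1 + 1) + π (n + 1 + 1) ∘ₗ A (n + 1) ∘ₗ η (n + 1)) ∘ₗ
          (dB (n + 1) + δ (n + 1))) :=
  homological_perturbation_lemma_part2_general S B dS dB hdB ι π hι hπ η hη δ hδ small A hA
end

section
/- Homological Perturbation Lemma, part 3 (paper's Appendix B Proposition): Given a homotopy equivalence between cochain complexes (S, d_S) and (B, d_B) with chain maps ι: S → B, π: B → S, homotopy η, and given a small perturbation δ of d_B, set A = (id − δ∘η)^{−1}∘δ, ι′ = ι + η∘A∘ι, π′ = π + π∘A∘η, and η′ = η + η∘A∘η. Then ι′∘π′ = id_B + (d_B + δ)∘η′ + η′∘(d_B + δ) in every degree, i.e. η′ is a homotopy between ι′∘π′ and the identity of the perturbed complex (B, d_B + δ). -/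
namespace HomologicalPerturbation

open LinearMap

section Transfer

variable {R M N : Type*} [Ring R] [AddCommGroup M] [Module R M] [AddCommGroup N] [Module R N]
  {δ A : M →ₗ[R] N} {η : N →ₗ[R] M}

theorem one_sub_comp_comp_eq (hu : IsUnit (1 - δ ∘ₗ η : Module.End R N))
    (hA : A = Ring.inverse (1 - δ ∘ₗ η : Module.End R N) ∘ₗ δ) :
    (1 - δ ∘ₗ η : Module.End R N) ∘ₗ A = δ := by
  rw [hA, ← comp_assoc, ← Module.End.mul_eq_comp, Ring.mul_inverse_cancel _ hu,
    Module.End.one_eq_id, id_comp]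

theorem comp_one_sub_comp_eq (hu : IsUnit (1 - δ ∘ₗ η : Module.End R N))
    (hA : A = Ring.inverse (1 - δ ∘ₗ η : Module.End R N) ∘ₗ δ) :
    A ∘ₗ (1 - η ∘ₗ δ : Module.End R M) = δ := by
  have hswap : δ ∘ₗ (1 - η ∘ₗ δ : Module.End R M) = (1 - δ ∘ₗ η : Module.End R N) ∘ₗ δ := by
    simp only [comp_sub, sub_comp, Module.End.one_eq_id, comp_id, id_comp, comp_assoc]
  rw [hA, comp_assoc, hswap, ← comp_assoc, ← Module.End.mul_eq_comp,
    Ring.inverse_mul_cancel _ hu, Module.End.one_eq_id, id_comp]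

end Transfer

variable {R : Type*} [Ring R] {B : ℤ → Type*} [∀ n, AddCommGroup (B n)] [∀ n, Module R (B n)]
  {dB δ A : ∀ n : ℤ, B n →ₗ[R] B (n + 1)} {η : ∀ n : ℤ, B (n + 1) →ₗ[R] B n}

theorem dB_comp_add_comp_dB_add_comp_homotopy_comp_eq_zero (n : ℤ)
    (hdB : dB (n + 1) ∘ₗ dB n = 0) (hδ : (dB (n + 1) + δ (n + 1)) ∘ₗ (dB n + δ n) = 0)
    (hu : IsUnit (1 - δ (n + 1) ∘ₗ η (n + 1) : Module.End R (B (n + 1 + 1))))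
    (hL₁ : (1 - δ (n + 1) ∘ₗ η (n + 1) : Module.End R (B (n + 1 + 1))) ∘ₗ A (n + 1) = δ (n + 1))
    (hL₀ : (1 - δ n ∘ₗ η n : Module.End R (B (n + 1))) ∘ₗ A n = δ n)
    (hR₀ : A n ∘ₗ (1 - η n ∘ₗ δ n : Module.End R (B n)) = δ n) :
    dB (n + 1) ∘ₗ A n + A (n + 1) ∘ₗ dB n
      + A (n + 1) ∘ₗ (LinearMap.id + dB n ∘ₗ η n + η (n + 1) ∘ₗ dB (n + 1)) ∘ₗ A n = 0 := by
  set L : Module.End R (B (n + 1 + 1)) := 1 - δ (n + 1) ∘ₗ η (n + 1)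
  set Rt : Module.End R (B n) := 1 - η n ∘ₗ δ n
  set P : Module.End R (B (n + 1)) := LinearMap.id + dB n ∘ₗ η n + η (n + 1) ∘ₗ dB (n + 1)
  set M := dB (n + 1) ∘ₗ A n + A (n + 1) ∘ₗ dB n + A (n + 1) ∘ₗ P ∘ₗ A n
  have maurerCartan : dB (n + 1) ∘ₗ δ n + δ (n + 1) ∘ₗ dB n + δ (n + 1) ∘ₗ δ n = 0 := by
    rw [← hδ]
    simp only [add_comp, comp_add, hdB]
    abel
  have sandwich : L ∘ₗ M ∘ₗ Rt = dB (n + 1) ∘ₗ δ n + δ (n + 1) ∘ₗ dB n + δ (n + 1) ∘ₗ δ n :=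
    calc L ∘ₗ M ∘ₗ Rt
        = L ∘ₗ dB (n + 1) ∘ₗ (A n ∘ₗ Rt) + (L ∘ₗ A (n + 1)) ∘ₗ dB n ∘ₗ Rt
          + (L ∘ₗ A (n + 1)) ∘ₗ P ∘ₗ (A n ∘ₗ Rt) := by
          simp only [M, add_comp, comp_add, comp_assoc]
      _ = L ∘ₗ dB (n + 1) ∘ₗ δ n + δ (n + 1) ∘ₗ dB n ∘ₗ Rt + δ (n + 1) ∘ₗ P ∘ₗ δ n := by
          rw [hR₀, hL₁]
      _ = dB (n + 1) ∘ₗ δ n + δ (n + 1) ∘ₗ dB n + δ (n + 1) ∘ₗ δ n := by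
          simp only [L, Rt, P, comp_sub, sub_comp, comp_add, add_comp, comp_assoc,
            Module.End.one_eq_id, id_comp, comp_id]
          abel
  have rightInverse : Rt ∘ₗ (1 + η n ∘ₗ A n : Module.End R (B n)) = 1 :=
    calc Rt ∘ₗ (1 + η n ∘ₗ A n : Module.End R (B n))
        = 1 + η n ∘ₗ ((1 - δ n ∘ₗ η n : Module.End R (B (n + 1))) ∘ₗ A n - δ n) := by
          simp only [Rt, comp_sub, sub_comp, comp_add, comp_assoc,
            Module.End.one_eq_id, id_comp, comp_id]
          abel
      _ = 1 := by rw [hL₀, sub_self, comp_zero, add_zero]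
  calc M = Ring.inverse L ∘ₗ (L ∘ₗ M ∘ₗ Rt) ∘ₗ (1 + η n ∘ₗ A n : Module.End R (B n)) := by
        rw [comp_assoc, comp_assoc, rightInverse, Module.End.one_eq_id, comp_id,
          ← comp_assoc, ← Module.End.mul_eq_comp, Ring.inverse_mul_cancel _ hu,
          Module.End.one_eq_id, id_comp]
    _ = 0 := by rw [sandwich, maurerCartan, zero_comp, comp_zero]

end HomologicalPerturbation

open HomologicalPerturbation LinearMap in
theorem homological_perturbation_lemma_part3_general {R : Type u} [Ring R]
    (S B : ℤ → Type v)
    [∀ n, AddCommGroup (S n)] [∀ n, Module R (S n)]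
    [∀ n, AddCommGroup (B n)] [∀ n, Module R (B n)]
    (dB : ∀ n : ℤ, B n →ₗ[R] B (n + 1))
    (hdB : ∀ n, dB (n + 1) ∘ₗ dB n = 0)
    (ι : ∀ n, S n →ₗ[R] B n) (π : ∀ n, B n →ₗ[R] S n)
    (η : ∀ n : ℤ, B (n + 1) →ₗ[R] B n)
    (hη : ∀ n, ι (n + 1) ∘ₗ π (n + 1) =
      LinearMap.id + dB n ∘ₗ η n + η (n + 1) ∘ₗ dB (n + 1))
    (δ : ∀ n : ℤ, B n →ₗ[R] B (n + 1))
    (hδ : ∀ n, (dB (n + 1) + δ (n + 1)) ∘ₗ (dB n + δ n) = 0)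
    (small : ∀ n : ℤ,
      IsUnit ((1 : Module.End R (B (n + 1))) - (δ n ∘ₗ η n : Module.End R (B (n + 1)))))
    (A : ∀ n : ℤ, B n →ₗ[R] B (n + 1))
    (hA : ∀ n : ℤ, A n =
      (Ring.inverse ((1 : Module.End R (B (n + 1)))
        - (δ n ∘ₗ η n : Module.End R (B (n + 1)))) : Module.End R (B (n + 1))) ∘ₗ δ n)
:
    ∀ n : ℤ,
      (ι (n + 1) + η (n + 1) ∘ₗ A (n + 1) ∘ₗ ι (n + 1)) ∘ₗ
          (π (n + 1) + π (n + 1) ∘ₗ A n ∘ₗ η n) =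
        LinearMap.id
          + (dB n + δ n) ∘ₗ (η n + η n ∘ₗ A n ∘ₗ η n)
          + (η (n + 1) + η (n + 1) ∘ₗ A (n + 1) ∘ₗ η (n + 1)) ∘ₗ
              (dB (n + 1) + δ (n + 1)) := by
  intro n
  have hL₁ := one_sub_comp_comp_eq (small (n + 1)) (hA (n + 1))
  have hL₀ := one_sub_comp_comp_eq (small n) (hA n)
  have hR₁ := comp_one_sub_comp_eq (small (n + 1)) (hA (n + 1))
  have hM := dB_comp_add_comp_dB_add_comp_homotopy_comp_eq_zero n (hdB n) (hδ n)
    (small (n + 1)) hL₁ hL₀ (comp_one_sub_comp_eq (small n) (hA n))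
  calc _ = (LinearMap.id + η (n + 1) ∘ₗ A (n + 1)) ∘ₗ (ι (n + 1) ∘ₗ π (n + 1))
          ∘ₗ (LinearMap.id + A n ∘ₗ η n) := by
        simp only [add_comp, comp_add, comp_assoc, id_comp, comp_id]
    _ = (LinearMap.id + η (n + 1) ∘ₗ A (n + 1))
          ∘ₗ (LinearMap.id + dB n ∘ₗ η n + η (n + 1) ∘ₗ dB (n + 1))
          ∘ₗ (LinearMap.id + A n ∘ₗ η n) := by rw [hη n]
    _ = LinearMap.id + (dB n + δ n) ∘ₗ (η n + η n ∘ₗ A n ∘ₗ η n)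
          + (η (n + 1) + η (n + 1) ∘ₗ A (n + 1) ∘ₗ η (n + 1)) ∘ₗ (dB (n + 1) + δ (n + 1))
          + ((1 - δ n ∘ₗ η n : Module.End R (B (n + 1))) ∘ₗ A n - δ n) ∘ₗ η n
          + η (n + 1) ∘ₗ (A (n + 1) ∘ₗ (1 - η (n + 1) ∘ₗ δ (n + 1) : Module.End R (B (n + 1)))
              - δ (n + 1))
          + η (n + 1) ∘ₗ (dB (n + 1) ∘ₗ A n + A (n + 1) ∘ₗ dB n
              + A (n + 1) ∘ₗ (LinearMap.id + dB n ∘ₗ η n + η (n + 1) ∘ₗ dB (n + 1)) ∘ₗ A n)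
            ∘ₗ η n := by
          simp only [add_comp, comp_add, sub_comp, comp_sub, comp_assoc, id_comp, comp_id,
            Module.End.one_eq_id]
          abel
    _ = _ := by rw [hL₀, hR₁, hM, sub_self, sub_self]; simp only [zero_comp, comp_zero, add_zero]

theorem homological_perturbation_lemma_part3 {R : Type u} [Ring R]
    (S B : ℤ → Type v)
    [∀ n, AddCommGroup (S n)] [∀ n, Module R (S n)]
    [∀ n, AddCommGroup (B n)] [∀ n, Module R (B n)]
    (dS : ∀ n : ℤ, S n →ₗ[R] S (n + 1)) (dB : ∀ n : ℤ, B n →ₗ[R] B (n + 1))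
    (hdS : ∀ n, dS (n + 1) ∘ₗ dS n = 0) (hdB : ∀ n, dB (n + 1) ∘ₗ dB n = 0)
    (ι : ∀ n, S n →ₗ[R] B n) (π : ∀ n, B n →ₗ[R] S n)
    (hι : ∀ n, dB n ∘ₗ ι n = ι (n + 1) ∘ₗ dS n)
    (hπ : ∀ n, dS n ∘ₗ π n = π (n + 1) ∘ₗ dB n)
    (hιq : IsQuasiIsoShifted dS dB fun n => ι (n + 1))
    (hπq : IsQuasiIsoShifted dB dS fun n => π (n + 1))
    (η : ∀ n : ℤ, B (n + 1) →ₗ[R] B n)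
    (hη : ∀ n, ι (n + 1) ∘ₗ π (n + 1) =
      LinearMap.id + dB n ∘ₗ η n + η (n + 1) ∘ₗ dB (n + 1))
    (δ : ∀ n : ℤ, B n →ₗ[R] B (n + 1))
    (hδ : ∀ n, (dB (n + 1) + δ (n + 1)) ∘ₗ (dB n + δ n) = 0)
    (small : ∀ n : ℤ,
      IsUnit ((1 : Module.End R (B (n + 1))) - (δ n ∘ₗ η n : Module.End R (B (n + 1)))))
    (A : ∀ n : ℤ, B n →ₗ[R] B (n + 1))
    (hA : ∀ n : ℤ, A n =
      (Ring.inverse ((1 : Module.End R (B (n + 1)))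
        - (δ n ∘ₗ η n : Module.End R (B (n + 1)))) : Module.End R (B (n + 1))) ∘ₗ δ n)
:
    ∀ n : ℤ,
      (ι (n + 1) + η (n + 1) ∘ₗ A (n + 1) ∘ₗ ι (n + 1)) ∘ₗ
          (π (n + 1) + π (n + 1) ∘ₗ A n ∘ₗ η n) =
        LinearMap.id
          + (dB n + δ n) ∘ₗ (η n + η n ∘ₗ A n ∘ₗ η n)
          + (η (n + 1) + η (n + 1) ∘ₗ A (n + 1) ∘ₗ η (n + 1)) ∘ₗ
              (dB (n + 1) + δ (n + 1)) :=
  homological_perturbation_lemma_part3_general S B dB hdB ι π η hη δ hδ small A hA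
end

section
/- Homological Perturbation Lemma, part 4 (paper's Appendix B Proposition): Given a homotopy equivalence between cochain complexes (S, d_S) and (B, d_B) with chain maps ι: S → B, π: B → S, homotopy η, and given a small perturbation δ of d_B, set A = (id − δ∘η)^{−1}∘δ and d′_S = d_S + π∘A∘ι. Then the chain maps ι′ = ι + η∘A∘ι and π′ = π + π∘A∘η between (S, d′_S) and (B, d_B + δ) are quasi-isomorphisms; in particular the perturbed data again constitutes a homotopy equivalence. -/
theorem inverse_one_sub_eq_one_add_mul_inverse {M : Type*} [Ring M] {a : M} (h : IsUnit (1 - a)) :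
    Ring.inverse (1 - a) = 1 + a * Ring.inverse (1 - a) :=
  calc Ring.inverse (1 - a) = (1 - a + a) * Ring.inverse (1 - a) := by rw [sub_add_cancel, one_mul]
    _ = 1 + a * Ring.inverse (1 - a) := by rw [add_mul, Ring.mul_inverse_cancel _ h]

theorem inverse_one_sub_eq_one_add_inverse_mul {M : Type*} [Ring M] {a : M} (h : IsUnit (1 - a)) :
    Ring.inverse (1 - a) = 1 + Ring.inverse (1 - a) * a :=
  calc Ring.inverse (1 - a) = Ring.inverse (1 - a) * (1 - a + a) := by rw [sub_add_cancel, mul_one]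
    _ = 1 + Ring.inverse (1 - a) * a := by rw [mul_add, Ring.inverse_mul_cancel _ h]

section QuasiIso

variable {R : Type*} [Ring R] {X Y : ℤ → Type v}
  [∀ n, AddCommGroup (X n)] [∀ n, Module R (X n)]
  [∀ n, AddCommGroup (Y n)] [∀ n, Module R (Y n)]
  {dX : ∀ n : ℤ, X n →ₗ[R] X (n + 1)} {dY : ∀ n : ℤ, Y n →ₗ[R] Y (n + 1)}
  {f : ∀ n, X n →ₗ[R] Y n} {g : ∀ n : ℤ, Y (n + 1) →ₗ[R] X (n + 1)}
  {h : ∀ n : ℤ, Y (n + 1) →ₗ[R] Y n}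

theorem isQuasiIsoShifted_of_homotopy_rightInverse
    (hg : ∀ n, dX (n + 1) ∘ₗ g n = g (n + 1) ∘ₗ dY (n + 1))
    (hfg : ∀ n, f (n + 1) ∘ₗ g n =
      LinearMap.id + dY n ∘ₗ h n + h (n + 1) ∘ₗ dY (n + 1))
    (hf : ∀ (n : ℤ) (x : X (n + 1)), dX (n + 1) x = 0 →
      (∃ z : Y n, f (n + 1) x = dY n z) → ∃ w : X n, x = dX n w) :
    IsQuasiIsoShifted dX dY fun n => f (n + 1) := by
  refine ⟨fun n y hy => ⟨g n y, ?_, h n y, ?_⟩, hf⟩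
  · simpa [hy] using LinearMap.congr_fun (hg n) y
  · simpa [hy] using LinearMap.congr_fun (hfg n) y

theorem isQuasiIsoShifted_of_homotopy_leftInverse
    (hf : ∀ n, dY n ∘ₗ f n = f (n + 1) ∘ₗ dX n)
    (hg : ∀ n, dX (n + 1) ∘ₗ g n = g (n + 1) ∘ₗ dY (n + 1))
    (hfg : ∀ n, f (n + 1) ∘ₗ g n =
      LinearMap.id + dY n ∘ₗ h n + h (n + 1) ∘ₗ dY (n + 1))
    (hf_inj : ∀ (n : ℤ) (x : X (n + 1)), dX (n + 1) x = 0 →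
      (∃ z : Y n, f (n + 1) x = dY n z) → ∃ w : X n, x = dX n w) :
    IsQuasiIsoShifted dY dX g := by
  have hf' (n) (x : X n) : dY n (f n x) = f (n + 1) (dX n x) := LinearMap.congr_fun (hf n) x
  have hg' (n) (y : Y (n + 1)) : dX (n + 1) (g n y) = g (n + 1) (dY (n + 1) y) :=
    LinearMap.congr_fun (hg n) y
  have hfg' (n) (y : Y (n + 1)) :
      f (n + 1) (g n y) = y + dY n (h n y) + h (n + 1) (dY (n + 1) y) :=
    LinearMap.congr_fun (hfg n) y
  constructor
  · intro n x hx
    have hfx : dY (n + 1) (f (n + 1) x) = 0 := by rw [hf', hx, map_zero]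
    obtain ⟨w, hw⟩ := hf_inj n (g n (f (n + 1) x) - x)
      (by rw [map_sub, hg', hfx, hx, map_zero, sub_zero])
      ⟨h n (f (n + 1) x), by rw [map_sub, hfg', hfx, map_zero, add_zero, add_sub_cancel_left]⟩
    exact ⟨f (n + 1) x, hfx, w, by rw [← hw, add_sub_cancel]⟩
  · rintro n y hy ⟨z, hz⟩
    refine ⟨f n z - h n y, ?_⟩
    have := hfg' n y
    rw [hz, ← hf', hy, map_zero, add_zero] at this
    rw [map_sub, this, add_sub_cancel_right]

end QuasiIso

namespace HomologicalPerturbation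

variable {R : Type*} [Ring R] {S B : ℤ → Type v}
  [∀ n, AddCommGroup (S n)] [∀ n, Module R (S n)]
  [∀ n, AddCommGroup (B n)] [∀ n, Module R (B n)]
  {dS : ∀ n : ℤ, S n →ₗ[R] S (n + 1)} {dB : ∀ n : ℤ, B n →ₗ[R] B (n + 1)}
  {ι : ∀ n, S n →ₗ[R] B n} {π : ∀ n, B n →ₗ[R] S n} {η : ∀ n : ℤ, B (n + 1) →ₗ[R] B n}
  {δ A : ∀ n : ℤ, B n →ₗ[R] B (n + 1)}

theorem comp_series_eq_series_sub {n : ℤ}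
    (small : IsUnit ((1 : Module.End R (B (n + 1))) - δ n ∘ₗ η n))
    (hA : A n = (Ring.inverse ((1 : Module.End R (B (n + 1))) - δ n ∘ₗ η n) :
      Module.End R (B (n + 1))) ∘ₗ δ n) :
    δ n ∘ₗ η n ∘ₗ A n = A n - δ n := by
  refine eq_sub_of_add_eq' ?_
  rw [hA]
  conv_rhs => rw [inverse_one_sub_eq_one_add_mul_inverse small]
  rfl

theorem series_comp_eq_series_sub {n : ℤ}
    (small : IsUnit ((1 : Module.End R (B (n + 1))) - δ n ∘ₗ η n))
    (hA : A n = (Ring.inverse ((1 : Module.End R (B (n + 1))) - δ n ∘ₗ η n) :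
      Module.End R (B (n + 1))) ∘ₗ δ n) :
    A n ∘ₗ η n ∘ₗ δ n = A n - δ n := by
  refine eq_sub_of_add_eq' ?_
  rw [hA]
  conv_rhs => rw [inverse_one_sub_eq_one_add_inverse_mul small]
  rfl

theorem maurerCartan_of_sq_eq_zero (hdB : ∀ n, dB (n + 1) ∘ₗ dB n = 0)
    (hδ : ∀ n, (dB (n + 1) + δ (n + 1)) ∘ₗ (dB n + δ n) = 0) (n : ℤ) :
    dB (n + 1) ∘ₗ δ n + δ (n + 1) ∘ₗ (dB n + δ n) = 0 := by
  rw [← hδ n]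
  simp only [LinearMap.add_comp, LinearMap.comp_add, hdB]
  abel

theorem series_maurerCartan
    (hη : ∀ n, ι (n + 1) ∘ₗ π (n + 1) =
      LinearMap.id + dB n ∘ₗ η n + η (n + 1) ∘ₗ dB (n + 1))
    (hmc : ∀ n, dB (n + 1) ∘ₗ δ n + δ (n + 1) ∘ₗ (dB n + δ n) = 0)
    (hA₁ : ∀ n, δ n ∘ₗ η n ∘ₗ A n = A n - δ n) (hA₂ : ∀ n, A n ∘ₗ η n ∘ₗ δ n = A n - δ n)
    (n : ℤ) :
    A (n + 1) ∘ₗ ι (n + 1) ∘ₗ π (n + 1) ∘ₗ A n =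
      -(dB (n + 1) ∘ₗ A n + A (n + 1) ∘ₗ dB n) := by
  simp only [LinearMap.ext_iff, LinearMap.comp_apply, LinearMap.add_apply, LinearMap.sub_apply,
    LinearMap.id_apply, LinearMap.zero_apply] at hη hmc hA₁ hA₂
  ext v
  have hw : δ n (v + η n (A n v)) = A n v := by rw [map_add, hA₁, add_sub_cancel]
  have h0 := congrArg (fun u => u + A (n + 1) (η (n + 1) u)) (hmc n (v + η n (A n v)))
  simp only [hw, map_add, hA₂, map_zero, add_zero] at h0
  simp only [LinearMap.comp_apply, LinearMap.neg_apply, LinearMap.add_apply, hη, map_add]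
  linear_combination (norm := abel) h0

theorem perturbedInclusion_comm
    (hι : ∀ n, dB n ∘ₗ ι n = ι (n + 1) ∘ₗ dS n)
    (hη : ∀ n, ι (n + 1) ∘ₗ π (n + 1) =
      LinearMap.id + dB n ∘ₗ η n + η (n + 1) ∘ₗ dB (n + 1))
    (hA₁ : ∀ n, δ n ∘ₗ η n ∘ₗ A n = A n - δ n)
    (hX : ∀ n, A (n + 1) ∘ₗ ι (n + 1) ∘ₗ π (n + 1) ∘ₗ A n =
      -(dB (n + 1) ∘ₗ A n + A (n + 1) ∘ₗ dB n))
    (n : ℤ) :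
    (dB n + δ n) ∘ₗ (ι n + η n ∘ₗ A n ∘ₗ ι n) =
      (ι (n + 1) + η (n + 1) ∘ₗ A (n + 1) ∘ₗ ι (n + 1)) ∘ₗ (dS n + π (n + 1) ∘ₗ A n ∘ₗ ι n) := by
  simp only [LinearMap.ext_iff, LinearMap.comp_apply, LinearMap.add_apply, LinearMap.sub_apply,
    LinearMap.neg_apply, LinearMap.id_apply] at hι hη hA₁ hX
  ext v
  simp only [LinearMap.comp_apply, LinearMap.add_apply, map_add]
  rw [hX, hη, ← hι, hA₁]
  simp only [map_add, map_neg]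
  abel

theorem perturbedProjection_comm
    (hπ : ∀ n, dS n ∘ₗ π n = π (n + 1) ∘ₗ dB n)
    (hη : ∀ n, ι (n + 1) ∘ₗ π (n + 1) =
      LinearMap.id + dB n ∘ₗ η n + η (n + 1) ∘ₗ dB (n + 1))
    (hA₂ : ∀ n, A n ∘ₗ η n ∘ₗ δ n = A n - δ n)
    (hX : ∀ n, A (n + 1) ∘ₗ ι (n + 1) ∘ₗ π (n + 1) ∘ₗ A n =
      -(dB (n + 1) ∘ₗ A n + A (n + 1) ∘ₗ dB n))
    (n : ℤ) :
    (dS (n + 1) + π (n + 1 + 1) ∘ₗ A (n + 1) ∘ₗ ι (n + 1)) ∘ₗ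
        (π (n + 1) + π (n + 1) ∘ₗ A n ∘ₗ η n) =
      (π (n + 1 + 1) + π (n + 1 + 1) ∘ₗ A (n + 1) ∘ₗ η (n + 1)) ∘ₗ (dB (n + 1) + δ (n + 1)) := by
  simp only [LinearMap.ext_iff, LinearMap.comp_apply, LinearMap.add_apply, LinearMap.sub_apply,
    LinearMap.neg_apply, LinearMap.id_apply] at hπ hη hA₂ hX
  ext v
  simp only [LinearMap.comp_apply, LinearMap.add_apply, map_add]
  rw [hπ, hπ, hX, hη, hA₂]
  simp only [map_add, map_sub, map_neg]
  abel

theorem perturbedInclusion_comp_perturbedProjection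
    (hη : ∀ n, ι (n + 1) ∘ₗ π (n + 1) =
      LinearMap.id + dB n ∘ₗ η n + η (n + 1) ∘ₗ dB (n + 1))
    (hA₁ : ∀ n, δ n ∘ₗ η n ∘ₗ A n = A n - δ n) (hA₂ : ∀ n, A n ∘ₗ η n ∘ₗ δ n = A n - δ n)
    (hX : ∀ n, A (n + 1) ∘ₗ ι (n + 1) ∘ₗ π (n + 1) ∘ₗ A n =
      -(dB (n + 1) ∘ₗ A n + A (n + 1) ∘ₗ dB n))
    (n : ℤ) :
    (ι (n + 1) + η (n + 1) ∘ₗ A (n + 1) ∘ₗ ι (n + 1)) ∘ₗ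
        (π (n + 1) + π (n + 1) ∘ₗ A n ∘ₗ η n) =
      LinearMap.id + (dB n + δ n) ∘ₗ (η n + η n ∘ₗ A n ∘ₗ η n) +
        (η (n + 1) + η (n + 1) ∘ₗ A (n + 1) ∘ₗ η (n + 1)) ∘ₗ (dB (n + 1) + δ (n + 1)) := by
  simp only [LinearMap.ext_iff, LinearMap.comp_apply, LinearMap.add_apply, LinearMap.sub_apply,
    LinearMap.neg_apply, LinearMap.id_apply] at hη hA₁ hA₂ hX
  ext v
  simp only [LinearMap.comp_apply, LinearMap.add_apply, LinearMap.id_apply, map_add]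
  rw [hX, hη, hη, hA₁, hA₂]
  simp only [map_add, map_sub, map_neg]
  abel

theorem exists_eq_perturbedDiff_of_cocycle
    (hπ : ∀ n, dS n ∘ₗ π n = π (n + 1) ∘ₗ dB n)
    (hιq : IsQuasiIsoShifted dS dB fun n => ι (n + 1))
    (hX : ∀ n, A (n + 1) ∘ₗ ι (n + 1) ∘ₗ π (n + 1) ∘ₗ A n =
      -(dB (n + 1) ∘ₗ A n + A (n + 1) ∘ₗ dB n))
    {n : ℤ} (u : B n) (hu : dB n u = 0) :
    ∃ v : S n, π (n + 1) (A n u) = (dS n + π (n + 1) ∘ₗ A n ∘ₗ ι n) v := by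
  simp only [LinearMap.ext_iff, LinearMap.comp_apply, LinearMap.add_apply,
    LinearMap.neg_apply] at hπ hX
  obtain ⟨m, rfl⟩ : ∃ m, n = m + 1 := ⟨n - 1, by omega⟩
  have hdiff (y : B m) :
      (dS (m + 1) + π (m + 1 + 1) ∘ₗ A (m + 1) ∘ₗ ι (m + 1)) (π (m + 1) (A m y)) =
        -π (m + 1 + 1) (A (m + 1) (dB m y)) := by
    simp only [LinearMap.add_apply, LinearMap.comp_apply, hπ, hX, map_neg, map_add]
    abel
  obtain ⟨x, hx, y, hy⟩ := hιq.1 m u hu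
  refine ⟨x + π (m + 1) (A m y), ?_⟩
  rw [map_add, hdiff, eq_sub_of_add_eq hy.symm]
  simp only [LinearMap.add_apply, LinearMap.comp_apply, hx, map_sub]
  abel

theorem perturbedInclusion_injective_on_cohomology
    (hι : ∀ n, dB n ∘ₗ ι n = ι (n + 1) ∘ₗ dS n)
    (hπ : ∀ n, dS n ∘ₗ π n = π (n + 1) ∘ₗ dB n)
    (hιq : IsQuasiIsoShifted dS dB fun n => ι (n + 1))
    (hη : ∀ n, ι (n + 1) ∘ₗ π (n + 1) =
      LinearMap.id + dB n ∘ₗ η n + η (n + 1) ∘ₗ dB (n + 1))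
    (hmc : ∀ n, dB (n + 1) ∘ₗ δ n + δ (n + 1) ∘ₗ (dB n + δ n) = 0)
    (hA₁ : ∀ n, δ n ∘ₗ η n ∘ₗ A n = A n - δ n) (hA₂ : ∀ n, A n ∘ₗ η n ∘ₗ δ n = A n - δ n)
    (hX : ∀ n, A (n + 1) ∘ₗ ι (n + 1) ∘ₗ π (n + 1) ∘ₗ A n =
      -(dB (n + 1) ∘ₗ A n + A (n + 1) ∘ₗ dB n))
    (n : ℤ) (x : S (n + 1))
    (hx : (dS (n + 1) + π (n + 1 + 1) ∘ₗ A (n + 1) ∘ₗ ι (n + 1)) x = 0)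
    (hxz : ∃ z : B n, (ι (n + 1) + η (n + 1) ∘ₗ A (n + 1) ∘ₗ ι (n + 1)) x = (dB n + δ n) z) :
    ∃ w : S n, x = (dS n + π (n + 1) ∘ₗ A n ∘ₗ ι n) w := by
  obtain ⟨z, hz⟩ := hxz
  have hexact := exists_eq_perturbedDiff_of_cocycle hπ hιq hX (n := n)
  simp only [LinearMap.ext_iff, LinearMap.comp_apply, LinearMap.add_apply, LinearMap.sub_apply,
    LinearMap.id_apply, LinearMap.zero_apply] at hι hπ hη hmc hA₁ hA₂ hx hz ⊢
  have hAι : A (n + 1) (ι (n + 1) x) = -dB (n + 1) (δ n z) := by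
    linear_combination (norm := (simp only [map_add]; abel))
      congrArg (δ (n + 1)) hz - hA₁ (n + 1) (ι (n + 1) x) + hmc n z
  have hx₀ : dS (n + 1) (x - π (n + 1) (δ n z)) = 0 := by
    rw [map_sub, eq_neg_of_add_eq_zero_left hx, hAι, hπ, map_neg]
    abel
  have hιx₀ : ι (n + 1) (x - π (n + 1) (δ n z)) = dB n (z - η n (δ n z)) := by
    rw [map_sub, eq_sub_of_add_eq hz, hAι, hη, map_sub]
    simp only [map_neg]
    abel
  obtain ⟨w, hw⟩ := hιq.2 n _ hx₀ ⟨_, hιx₀⟩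
  obtain ⟨v, hv⟩ := hexact (ι n w - (z - η n (δ n z)))
    (by rw [map_sub, hι, ← hw, hιx₀, sub_self])
  refine ⟨w - v, ?_⟩
  simp only [map_sub, hA₂] at hv
  linear_combination
    (norm := (simp only [LinearMap.add_apply, LinearMap.comp_apply, map_sub]; abel)) hw - hv

end HomologicalPerturbation

open HomologicalPerturbation

theorem homological_perturbation_lemma_part4_general {R : Type u} [Ring R]
    (S B : ℤ → Type v)
    [∀ n, AddCommGroup (S n)] [∀ n, Module R (S n)]
    [∀ n, AddCommGroup (B n)] [∀ n, Module R (B n)]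
    (dS : ∀ n : ℤ, S n →ₗ[R] S (n + 1)) (dB : ∀ n : ℤ, B n →ₗ[R] B (n + 1))
    (hdB : ∀ n, dB (n + 1) ∘ₗ dB n = 0)
    (ι : ∀ n, S n →ₗ[R] B n) (π : ∀ n, B n →ₗ[R] S n)
    (hι : ∀ n, dB n ∘ₗ ι n = ι (n + 1) ∘ₗ dS n)
    (hπ : ∀ n, dS n ∘ₗ π n = π (n + 1) ∘ₗ dB n)
    (hιq : IsQuasiIsoShifted dS dB fun n => ι (n + 1))
    (η : ∀ n : ℤ, B (n + 1) →ₗ[R] B n)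
    (hη : ∀ n, ι (n + 1) ∘ₗ π (n + 1) =
      LinearMap.id + dB n ∘ₗ η n + η (n + 1) ∘ₗ dB (n + 1))
    (δ : ∀ n : ℤ, B n →ₗ[R] B (n + 1))
    (hδ : ∀ n, (dB (n + 1) + δ (n + 1)) ∘ₗ (dB n + δ n) = 0)
    (small : ∀ n : ℤ,
      IsUnit ((1 : Module.End R (B (n + 1))) - (δ n ∘ₗ η n : Module.End R (B (n + 1)))))
    (A : ∀ n : ℤ, B n →ₗ[R] B (n + 1))
    (hA : ∀ n : ℤ, A n =
      (Ring.inverse ((1 : Module.End R (B (n + 1)))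
        - (δ n ∘ₗ η n : Module.End R (B (n + 1)))) : Module.End R (B (n + 1))) ∘ₗ δ n)
:
    IsQuasiIsoShifted (fun n => dS n + π (n + 1) ∘ₗ A n ∘ₗ ι n)
        (fun n => dB n + δ n)
        (fun n => ι (n + 1) + η (n + 1) ∘ₗ A (n + 1) ∘ₗ ι (n + 1)) ∧
    IsQuasiIsoShifted (fun n => dB n + δ n)
        (fun n => dS n + π (n + 1) ∘ₗ A n ∘ₗ ι n)
        (fun n => π (n + 1) + π (n + 1) ∘ₗ A n ∘ₗ η n) := by
  have hmc := maurerCartan_of_sq_eq_zero hdB hδ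
  have hA₁ n := comp_series_eq_series_sub (small n) (hA n)
  have hA₂ n := series_comp_eq_series_sub (small n) (hA n)
  have hX := series_maurerCartan hη hmc hA₁ hA₂
  have hπ' := perturbedProjection_comm hπ hη hA₂ hX
  have hη' := perturbedInclusion_comp_perturbedProjection hη hA₁ hA₂ hX
  have hinj := perturbedInclusion_injective_on_cohomology hι hπ hιq hη hmc hA₁ hA₂ hX
  have hι' := perturbedInclusion_comm hι hη hA₁ hX
  exact ⟨isQuasiIsoShifted_of_homotopy_rightInverse (f := fun n => ι n + η n ∘ₗ A n ∘ₗ ι n)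
      hπ' hη' hinj,
    isQuasiIsoShifted_of_homotopy_leftInverse hι' hπ' hη' hinj⟩

theorem homological_perturbation_lemma_part4 {R : Type u} [Ring R]
    (S B : ℤ → Type v)
    [∀ n, AddCommGroup (S n)] [∀ n, Module R (S n)]
    [∀ n, AddCommGroup (B n)] [∀ n, Module R (B n)]
    (dS : ∀ n : ℤ, S n →ₗ[R] S (n + 1)) (dB : ∀ n : ℤ, B n →ₗ[R] B (n + 1))
    (hdS : ∀ n, dS (n + 1) ∘ₗ dS n = 0) (hdB : ∀ n, dB (n + 1) ∘ₗ dB n = 0)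
    (ι : ∀ n, S n →ₗ[R] B n) (π : ∀ n, B n →ₗ[R] S n)
    (hι : ∀ n, dB n ∘ₗ ι n = ι (n + 1) ∘ₗ dS n)
    (hπ : ∀ n, dS n ∘ₗ π n = π (n + 1) ∘ₗ dB n)
    (hιq : IsQuasiIsoShifted dS dB fun n => ι (n + 1))
    (hπq : IsQuasiIsoShifted dB dS fun n => π (n + 1))
    (η : ∀ n : ℤ, B (n + 1) →ₗ[R] B n)
    (hη : ∀ n, ι (n + 1) ∘ₗ π (n + 1) =
      LinearMap.id + dB n ∘ₗ η n + η (n + 1) ∘ₗ dB (n + 1))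
    (δ : ∀ n : ℤ, B n →ₗ[R] B (n + 1))
    (hδ : ∀ n, (dB (n + 1) + δ (n + 1)) ∘ₗ (dB n + δ n) = 0)
    (small : ∀ n : ℤ,
      IsUnit ((1 : Module.End R (B (n + 1))) - (δ n ∘ₗ η n : Module.End R (B (n + 1)))))
    (A : ∀ n : ℤ, B n →ₗ[R] B (n + 1))
    (hA : ∀ n : ℤ, A n =
      (Ring.inverse ((1 : Module.End R (B (n + 1)))
        - (δ n ∘ₗ η n : Module.End R (B (n + 1)))) : Module.End R (B (n + 1))) ∘ₗ δ n)
: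
    IsQuasiIsoShifted (fun n => dS n + π (n + 1) ∘ₗ A n ∘ₗ ι n)
        (fun n => dB n + δ n)
        (fun n => ι (n + 1) + η (n + 1) ∘ₗ A (n + 1) ∘ₗ ι (n + 1)) ∧
    IsQuasiIsoShifted (fun n => dB n + δ n)
        (fun n => dS n + π (n + 1) ∘ₗ A n ∘ₗ ι n)
        (fun n => π (n + 1) + π (n + 1) ∘ₗ A n ∘ₗ η n) :=
  homological_perturbation_lemma_part4_general S B dS dB hdB ι π hι hπ hιq η hη δ hδ small A hA
end

section
/- One coupling constant up to isomorphism (§5.2): With the two-row data (V_i, W_j, U, a, b, s, t, u, w) fixed as in the context, for all nonzero real numbers m, e, λ, κ there is an isomorphism of cochain complexes of abelian groups T⟨m, e, λ, κ⟩ ≅ T⟨1, 1, 1, (eκ)/(mλ)⟩, given degreewise by multiplication by suitable nonzero real scalars on the vector-space summands and by the identity on the two copies of ℤ. -/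
/-!
Statement 13: One coupling constant up to isomorphism (§5.2 of the paper).

Fix `p q : ℕ`, real vector spaces `V₀, …, V_p`, `W₀, …, W_q`, `U` (encoded as ℤ-indexed
families `V W : ℤ → Type` vanishing outside `[0, p]` resp. `[0, q]`), linear maps
`a_i : V_i → V_{i+1}`, `b_j : W_j → W_{j+1}`, `s : V_p → U`, `t : W_q → U`, and additive
maps `u : ℤ → V₀`, `w : ℤ → W₀`, with all composites of consecutive maps vanishing.
For nonzero reals `m, e, λ, κ`, `T⟨m,e,λ,κ⟩` is the cochain complex of abelian groups
whose degree-`r` term is `ℤ` (at `-p-1`) ⊕ `ℤ` (at `-q-1`) ⊕ `V_{p+r}` ⊕ `W_{q+r}` ⊕ `U`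
(at `1`), with differentials `m·u`, `e·w`, the `a`'s and `b`'s, and `λ·s`, `-κ·t` into the
degree-`1` term `U`.

Then for all nonzero `m, e, λ, κ` there is an isomorphism of cochain complexes of abelian
groups `T⟨m,e,λ,κ⟩ ≅ T⟨1,1,1,(eκ)/(mλ)⟩` given degreewise by multiplication by suitable
nonzero real scalars on the vector-space summands and by the identity on the two copies
of `ℤ`.
-/

universe v

noncomputable section

/-- Transport along an equality of indices in a ℤ-indexed family of abelian groups. -/
def famCast {V : ℤ → Type v} [∀ i, AddCommGroup (V i)] {i j : ℤ} (h : i = j) :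
    V i →+ V j := by
  subst h; exact AddMonoidHom.id _

/-- A copy of `ℤ` placed in the single degree `d`: as a subgroup of `ℤ`, everything in
degree `r = d` and zero otherwise. -/
def zAt (d r : ℤ) : AddSubgroup ℤ := if r = d then ⊤ else ⊥

/-- A real vector space `M` placed in the single degree `d`: as a submodule of `M`,
everything in degree `r = d` and zero otherwise. -/
def modAt (M : Type v) [AddCommGroup M] [Module ℝ M] (d r : ℤ) : Submodule ℝ M :=
  if r = d then ⊤ else ⊥

/-- Include `M` into its degree-`d` copy, in degree `r = d`. -/
def intoModAt {M : Type v} [AddCommGroup M] [Module ℝ M] {d r : ℤ} (h : r = d) :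
    M →+ ↥(modAt M d r) where
  toFun x := ⟨x, by simp [modAt, h]⟩
  map_zero' := rfl
  map_add' _ _ := rfl

section TwoRow

variable (p q : ℕ)
variable (V W : ℤ → Type v)
variable [∀ i, AddCommGroup (V i)] [∀ i, Module ℝ (V i)]
variable [∀ i, AddCommGroup (W i)] [∀ i, Module ℝ (W i)]
variable (U : Type v) [AddCommGroup U] [Module ℝ U]
variable (a : ∀ i : ℤ, V i →ₗ[ℝ] V (i + 1))
variable (b : ∀ i : ℤ, W i →ₗ[ℝ] W (i + 1))
variable (s : V (p : ℤ) →ₗ[ℝ] U) (t : W (q : ℤ) →ₗ[ℝ] U)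
variable (u : ℤ →+ V 0) (w : ℤ →+ W 0)

/-- Degree-`r` term of the two-row complex `T⟨m,e,λ,κ⟩`: the direct sum of a copy of `ℤ`
in degree `-p-1`, a copy of `ℤ` in degree `-q-1`, `V_{p+r}`, `W_{q+r}`, and `U` in
degree `1`.  (The terms do not depend on the coupling constants.) -/
abbrev TTerm (r : ℤ) :=
  ↥(zAt (-(p : ℤ) - 1) r) × ↥(zAt (-(q : ℤ) - 1) r) ×
    V ((p : ℤ) + r) × W ((q : ℤ) + r) × ↥(modAt U 1 r)

/-- Projection onto the first `ℤ`-summand. -/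
def prZ1 (r : ℤ) : TTerm p q V W U r →+ ↥(zAt (-(p : ℤ) - 1) r) :=
  AddMonoidHom.mk' (fun x => x.1) (fun _ _ => rfl)

/-- Projection onto the second `ℤ`-summand. -/
def prZ2 (r : ℤ) : TTerm p q V W U r →+ ↥(zAt (-(q : ℤ) - 1) r) :=
  AddMonoidHom.mk' (fun x => x.2.1) (fun _ _ => rfl)

/-- Projection onto the `V`-summand. -/
def prV (r : ℤ) : TTerm p q V W U r →+ V ((p : ℤ) + r) :=
  AddMonoidHom.mk' (fun x => x.2.2.1) (fun _ _ => rfl)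

/-- Projection onto the `W`-summand. -/
def prW (r : ℤ) : TTerm p q V W U r →+ W ((q : ℤ) + r) :=
  AddMonoidHom.mk' (fun x => x.2.2.2.1) (fun _ _ => rfl)

/-- The component of the differential landing in the `V`-row: the row map `a` together
with (in degree `-p-1`) the map `m·u` out of the first copy of `ℤ`. -/
def dTV (m : ℝ) (r : ℤ) : TTerm p q V W U r →+ V ((p : ℤ) + (r + 1)) :=
  (famCast (by ring : (p : ℤ) + r + 1 = (p : ℤ) + (r + 1))).comp
      ((a ((p : ℤ) + r)).toAddMonoidHom.comp (prV p q V W U r))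
    + (if h : r = -(p : ℤ) - 1 then
        (famCast (by omega : (0 : ℤ) = (p : ℤ) + (r + 1))).comp
          (((LinearMap.lsmul ℝ (V 0) m).toAddMonoidHom.comp u).comp
            ((zAt (-(p : ℤ) - 1) r).subtype.comp (prZ1 p q V W U r)))
      else 0)

/-- The component of the differential landing in the `W`-row: the row map `b` together
with (in degree `-q-1`) the map `e·w` out of the second copy of `ℤ`. -/
def dTW (e : ℝ) (r : ℤ) : TTerm p q V W U r →+ W ((q : ℤ) + (r + 1)) :=
  (famCast (by ring : (q : ℤ) + r + 1 = (q : ℤ) + (r + 1))).comp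
      ((b ((q : ℤ) + r)).toAddMonoidHom.comp (prW p q V W U r))
    + (if h : r = -(q : ℤ) - 1 then
        (famCast (by omega : (0 : ℤ) = (q : ℤ) + (r + 1))).comp
          (((LinearMap.lsmul ℝ (W 0) e).toAddMonoidHom.comp w).comp
            ((zAt (-(q : ℤ) - 1) r).subtype.comp (prZ2 p q V W U r)))
      else 0)

/-- The component of the differential landing in the degree-`1` term `U`:
`λ·s` on the `V`-row and `-κ·t` on the `W`-row. -/
def dTU (lam kap : ℝ) (r : ℤ) : TTerm p q V W U r →+ ↥(modAt U 1 (r + 1)) :=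
  if h : r = 0 then
    (intoModAt (by omega : r + 1 = 1)).comp
      (((lam • s).toAddMonoidHom.comp
          ((famCast (by omega : (p : ℤ) + r = (p : ℤ))).comp (prV p q V W U r)))
        + (((-kap) • t).toAddMonoidHom.comp
            ((famCast (by omega : (q : ℤ) + r = (q : ℤ))).comp (prW p q V W U r))))
  else 0

/-- The degree-`r` differential of the two-row complex `T⟨m,e,λ,κ⟩`. -/
def dT (m e lam kap : ℝ) (r : ℤ) : TTerm p q V W U r →+ TTerm p q V W U (r + 1) :=
  (0 : TTerm p q V W U r →+ ↥(zAt (-(p : ℤ) - 1) (r + 1))).prod <|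
    (0 : TTerm p q V W U r →+ ↥(zAt (-(q : ℤ) - 1) (r + 1))).prod <|
      (dTV p q V W U a u m r).prod <|
        (dTW p q V W U b w e r).prod (dTU p q V W U s t lam kap r)

end TwoRow

/-!
Rescaling the `V`-row by `1/m`, the `W`-row by `1/e` and `U` by `1/(mλ)` commutes with the
differentials once `m`, `e`, `λ` are replaced by `1`; the `W`-component into `U` then forces
the remaining constant to be `eκ/(mλ)`.
-/

lemma famCast_smul {V : ℤ → Type v} [∀ i, AddCommGroup (V i)] [∀ i, Module ℝ (V i)]
    {i j : ℤ} (h : i = j) (c : ℝ) (x : V i) :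
    famCast (V := V) h (c • x) = c • famCast (V := V) h x := by
  subst h; rfl

lemma intoModAt_smul {M : Type v} [AddCommGroup M] [Module ℝ M] {d r : ℤ} (h : r = d)
    (c : ℝ) (x : M) : intoModAt h (c • x) = c • intoModAt h x :=
  rfl

section Rescaling

variable {p q : ℕ} {V W : ℤ → Type v}
variable [∀ i, AddCommGroup (V i)] [∀ i, Module ℝ (V i)]
variable [∀ i, AddCommGroup (W i)] [∀ i, Module ℝ (W i)]
variable {U : Type v} [AddCommGroup U] [Module ℝ U]

def scaleTerm (cV cW cU : ℝ) (r : ℤ) (x : TTerm p q V W U r) : TTerm p q V W U r :=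
  (x.1, x.2.1, cV • x.2.2.1, cW • x.2.2.2.1, cU • x.2.2.2.2)

def scaleEquiv {cV cW cU : ℝ} (hV : cV ≠ 0) (hW : cW ≠ 0) (hU : cU ≠ 0) (r : ℤ) :
    TTerm p q V W U r ≃+ TTerm p q V W U r :=
  (AddEquiv.refl _).prodCongr <| (AddEquiv.refl _).prodCongr <|
    (LinearEquiv.smulOfNeZero ℝ _ cV hV).toAddEquiv.prodCongr <|
      (LinearEquiv.smulOfNeZero ℝ _ cW hW).toAddEquiv.prodCongr
        (LinearEquiv.smulOfNeZero ℝ _ cU hU).toAddEquiv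

lemma scaleEquiv_apply {cV cW cU : ℝ} (hV : cV ≠ 0) (hW : cW ≠ 0) (hU : cU ≠ 0) (r : ℤ)
    (x : TTerm p q V W U r) : scaleEquiv hV hW hU r x = scaleTerm cV cW cU r x :=
  rfl

lemma dTV_scaleTerm (a : ∀ i : ℤ, V i →ₗ[ℝ] V (i + 1)) (u : ℤ →+ V 0) {cV m m' : ℝ}
    (hm : cV * m = m') (cW cU : ℝ) (r : ℤ) (x : TTerm p q V W U r) :
    dTV p q V W U a u m' r (scaleTerm cV cW cU r x) = cV • dTV p q V W U a u m r x := by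
  simp only [dTV, scaleTerm, prV, prZ1, AddMonoidHom.add_apply, AddMonoidHom.coe_comp,
    Function.comp_apply, AddMonoidHom.mk'_apply, LinearMap.toAddMonoidHom_coe, map_smul,
    famCast_smul, smul_add]
  split_ifs
  · simp only [AddMonoidHom.coe_comp, Function.comp_apply, LinearMap.toAddMonoidHom_coe,
      LinearMap.lsmul_apply, ← hm, mul_smul, famCast_smul]
    rfl
  · simp only [AddMonoidHom.zero_apply, smul_zero]

lemma dTW_scaleTerm (b : ∀ i : ℤ, W i →ₗ[ℝ] W (i + 1)) (w : ℤ →+ W 0) {cW e e' : ℝ}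
    (he : cW * e = e') (cV cU : ℝ) (r : ℤ) (x : TTerm p q V W U r) :
    dTW p q V W U b w e' r (scaleTerm cV cW cU r x) = cW • dTW p q V W U b w e r x := by
  simp only [dTW, scaleTerm, prW, prZ2, AddMonoidHom.add_apply, AddMonoidHom.coe_comp,
    Function.comp_apply, AddMonoidHom.mk'_apply, LinearMap.toAddMonoidHom_coe, map_smul,
    famCast_smul, smul_add]
  split_ifs
  · simp only [AddMonoidHom.coe_comp, Function.comp_apply, LinearMap.toAddMonoidHom_coe,
      LinearMap.lsmul_apply, ← he, mul_smul, famCast_smul]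
    rfl
  · simp only [AddMonoidHom.zero_apply, smul_zero]

lemma dTU_scaleTerm (s : V (p : ℤ) →ₗ[ℝ] U) (t : W (q : ℤ) →ₗ[ℝ] U)
    {cV cW cU lam lam' kap kap' : ℝ} (hlam : cV * lam' = cU * lam)
    (hkap : cW * kap' = cU * kap) (r : ℤ) (x : TTerm p q V W U r) :
    dTU p q V W U s t lam' kap' r (scaleTerm cV cW cU r x) =
      cU • dTU p q V W U s t lam kap r x := by
  unfold dTU
  split_ifs
  · simp only [scaleTerm, prV, prW, AddMonoidHom.add_apply, AddMonoidHom.coe_comp,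
      Function.comp_apply, AddMonoidHom.mk'_apply, LinearMap.toAddMonoidHom_coe, map_smul,
      famCast_smul, LinearMap.smul_apply]
    rw [← intoModAt_smul]
    simp only [smul_add, smul_smul, mul_neg, hlam, hkap]
  · simp only [AddMonoidHom.zero_apply, smul_zero]

lemma dT_scaleTerm (a : ∀ i : ℤ, V i →ₗ[ℝ] V (i + 1)) (b : ∀ i : ℤ, W i →ₗ[ℝ] W (i + 1))
    (s : V (p : ℤ) →ₗ[ℝ] U) (t : W (q : ℤ) →ₗ[ℝ] U) (u : ℤ →+ V 0) (w : ℤ →+ W 0)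
    {cV cW cU m m' e e' lam lam' kap kap' : ℝ} (hm : cV * m = m') (he : cW * e = e')
    (hlam : cV * lam' = cU * lam) (hkap : cW * kap' = cU * kap) (r : ℤ)
    (x : TTerm p q V W U r) :
    dT p q V W U a b s t u w m' e' lam' kap' r (scaleTerm cV cW cU r x) =
      scaleTerm cV cW cU (r + 1) (dT p q V W U a b s t u w m e lam kap r x) :=
  Prod.ext rfl <| Prod.ext rfl <| Prod.ext (dTV_scaleTerm a u hm cW cU r x) <|
    Prod.ext (dTW_scaleTerm b w he cV cU r x) (dTU_scaleTerm s t hlam hkap r x)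

end Rescaling

theorem one_coupling_constant_up_to_isomorphism
    (p q : ℕ) (V W : ℤ → Type v)
    [∀ i, AddCommGroup (V i)] [∀ i, Module ℝ (V i)]
    [∀ i, AddCommGroup (W i)] [∀ i, Module ℝ (W i)]
    (U : Type v) [AddCommGroup U] [Module ℝ U]
    (a : ∀ i : ℤ, V i →ₗ[ℝ] V (i + 1)) (b : ∀ i : ℤ, W i →ₗ[ℝ] W (i + 1))
    (s : V (p : ℤ) →ₗ[ℝ] U) (t : W (q : ℤ) →ₗ[ℝ] U)
    (u : ℤ →+ V 0) (w : ℤ →+ W 0)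
    (m e lam kap : ℝ) (hm : m ≠ 0) (he : e ≠ 0) (hlam : lam ≠ 0) :
    ∃ φ : ∀ r : ℤ, TTerm p q V W U r ≃+ TTerm p q V W U r,
      -- φ is a chain map  T⟨m,e,λ,κ⟩ → T⟨1,1,1,(e·κ)/(m·λ)⟩  …
      (∀ (r : ℤ) (x : TTerm p q V W U r),
        dT p q V W U a b s t u w 1 1 1 (e * kap / (m * lam)) r (φ r x) =
          φ (r + 1) (dT p q V W U a b s t u w m e lam kap r x)) ∧
      -- … given degreewise by nonzero real scalars on the vector-space summands and by
      -- the identity on the two copies of ℤ.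
      ∃ (cV cW : ℤ → ℝ) (cU : ℝ),
        (∀ i, cV i ≠ 0) ∧ (∀ i, cW i ≠ 0) ∧ cU ≠ 0 ∧
        ∀ (r : ℤ) (x : TTerm p q V W U r),
          φ r x = (x.1, x.2.1, cV ((p : ℤ) + r) • x.2.2.1,
            cW ((q : ℤ) + r) • x.2.2.2.1, cU • x.2.2.2.2) := by
  have hml : m * lam ≠ 0 := mul_ne_zero hm hlam
  refine ⟨scaleEquiv (inv_ne_zero hm) (inv_ne_zero he) (inv_ne_zero hml), fun r x => ?_,
    fun _ => m⁻¹, fun _ => e⁻¹, (m * lam)⁻¹, fun _ => inv_ne_zero hm, fun _ => inv_ne_zero he,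
    inv_ne_zero hml, scaleEquiv_apply _ _ _⟩
  rw [scaleEquiv_apply, scaleEquiv_apply]
  refine dT_scaleTerm a b s t u w (inv_mul_cancel₀ hm) (inv_mul_cancel₀ he) ?_ ?_ r x <;>
    field_simp

end
end
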